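/- Let S be a discrete set and X a Banach space, and identify c_0(S, X)*** with ℓ^∞(S, X**)* = c_0(S, X**)^⊥ ⊕_1 ℓ¹(S, X***). Let Λ = ∑_{i=1}^∞ α_i (e_{s_i} ⊗ x_i*) ∈ S(c_0(S, X)*) = S(ℓ¹(S, X*)) with α_i ∈ (0,1], ∑ α_i = 1, s_i ∈ S distinct, and each x_i* ∈ S(X*) a w*-w point of continuity of X*_1. Then Λ has a unique norm-preserving extension from c_0(S, X) to c_0(S, X)** = ℓ^∞(S, X**); consequently Λ is a w*-w point of continuity of c_0(S, X)*_1. -/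

import Mathlib

open NormedSpace Filter Topology

/-- The topological dual of a seminormed space `E`, as `NormedSpace.Dual` was defined in the
older Mathlib (no longer present): `E →L[𝕜] 𝕜`, with `E` carrying its norm topology. -/
abbrev NormedSpace.Dual (𝕜 : Type*) [NontriviallyNormedField 𝕜] (E : Type*)
    [SeminormedAddCommGroup E] [NormedSpace 𝕜 E] : Type _ := E →L[𝕜] 𝕜

/-- `x*` in the dual unit ball is a *w\*-w point of continuity*: every net (filter) in the
dual unit ball converging weak\* to `x*` converges weakly to `x*`. -/
def IsWStarWPC {E : Type*} [NormedAddCommGroup E] [NormedSpace ℝ E]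
    (x : Dual ℝ E) : Prop :=
  ∀ l : Filter (Dual ℝ E), l.NeBot → (∀ᶠ φ in l, ‖φ‖ ≤ 1) →
    (∀ v : E, Tendsto (fun φ : Dual ℝ E => φ v) l (𝓝 (x v))) →
    ∀ Λ : Dual ℝ (Dual ℝ E), Tendsto (fun φ : Dual ℝ E => Λ φ) l (𝓝 (Λ x))

/-!
In `c₀(S, X)*` the norm is additive over disjoint coordinates:
`∑_{t ∈ T} ‖φ ∘ e_t‖ + ‖φ off T‖ ≤ ‖φ‖`. Let `φ` be a net in the dual unit ball converging
weak* to `Λ`. By weak* lower semicontinuity of the coordinate norms, eventually almost all of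
the mass of `φ` sits on finitely many coordinates `s_i`, and `‖φ ∘ e_{s_i}‖` is at most about
`α_i`. Rescaled into the unit ball, the coordinates `φ ∘ e_{s_i}` converge weak* to `x_i*`,
hence weakly since `x_i*` is a w*-w point of continuity; weak convergence of finitely many
coordinates together with uniformly small tails gives weak convergence of `φ` to `Λ`.

A norm-preserving extension of `Λ` to the bidual is, by Goldstine's theorem, the weak* limit in
`c₀(S, X)***` of a net from the unit ball of `c₀(S, X)*`; that net converges weak* to `Λ`, hence
weakly, so the extension is the canonical one.
-/

open Metric Finset
open scoped ZeroAtInfty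

section Dual

variable {E : Type*} [NormedAddCommGroup E] [NormedSpace ℝ E]

namespace ContinuousLinearMap

theorem apply_le_opNorm_of_norm_le_one (y : Dual ℝ E) {u : E} (hu : ‖u‖ ≤ 1) : y u ≤ ‖y‖ :=
  (Real.le_norm_self _).trans <| by simpa using y.le_opNorm_of_le hu

theorem exists_norm_le_one_lt_apply (y : Dual ℝ E) {r : ℝ} (hr : r < ‖y‖) :
    ∃ u : E, ‖u‖ ≤ 1 ∧ r < y u := by
  obtain ⟨v, hv, hrv⟩ := y.exists_lt_apply_of_lt_opNorm hr
  rw [Real.norm_eq_abs] at hrv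
  rcases abs_cases (y v) with ⟨h, -⟩ | ⟨h, -⟩
  · exact ⟨v, hv.le, h ▸ hrv⟩
  · exact ⟨-v, by simpa using hv.le, by rwa [map_neg, ← h]⟩

theorem opNorm_le_of_apply_le (y : Dual ℝ E) {C : ℝ} (h : ∀ u : E, ‖u‖ ≤ 1 → y u ≤ C) :
    ‖y‖ ≤ C :=
  le_of_not_gt fun hC => by
    obtain ⟨u, hu, hCu⟩ := y.exists_norm_le_one_lt_apply hC
    exact (h u hu).not_gt hCu

end ContinuousLinearMap

theorem exists_norm_le_one_lt_sum_apply {ι : Type*} (T : Finset ι) (y : ι → Dual ℝ E) {r : ℝ}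
    (hr : r < ∑ i ∈ T, ‖y i‖) : ∃ u : ι → E, (∀ i, ‖u i‖ ≤ 1) ∧ r < ∑ i ∈ T, y i (u i) := by
  set δ := (∑ i ∈ T, ‖y i‖ - r) / (#T + 1)
  have hδ : 0 < δ := div_pos (sub_pos.2 hr) (by positivity)
  have hgap : #T * δ < ∑ i ∈ T, ‖y i‖ - r := by
    rw [← div_mul_cancel₀ (∑ i ∈ T, ‖y i‖ - r) (by positivity : (#T + 1 : ℝ) ≠ 0)]
    nlinarith
  choose u hu hyu using fun i => (y i).exists_norm_le_one_lt_apply (sub_lt_self ‖y i‖ hδ)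
  refine ⟨u, hu, ?_⟩
  calc r < ∑ i ∈ T, (‖y i‖ - δ) := by rw [sum_sub_distrib, sum_const, nsmul_eq_mul]; linarith
    _ ≤ ∑ i ∈ T, y i (u i) := sum_le_sum fun i _ => (hyu i).le

theorem eventually_lt_sum_norm_of_tendsto_apply {ι β : Type*} {l : Filter β}
    {y : β → ι → Dual ℝ E} {Y : ι → Dual ℝ E}
    (hy : ∀ i v, Tendsto (fun b => y b i v) l (𝓝 (Y i v))) (T : Finset ι) {r : ℝ}
    (hr : r < ∑ i ∈ T, ‖Y i‖) : ∀ᶠ b in l, r < ∑ i ∈ T, ‖y b i‖ := by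
  obtain ⟨u, hu, hru⟩ := exists_norm_le_one_lt_sum_apply T Y hr
  filter_upwards [(tendsto_finsetSum T fun i _ => hy i (u i)).eventually (lt_mem_nhds hru)]
    with b hb
  exact hb.trans_le <| sum_le_sum fun i _ => (y b i).apply_le_opNorm_of_norm_le_one (hu i)

theorem IsWStarWPC.tendsto_apply_smul {x : Dual ℝ E} (hx : IsWStarWPC x) {β : Type*}
    {l : Filter β} [l.NeBot] {y : β → Dual ℝ E} {a : ℝ} (ha : 0 < a)
    (hnorm : ∀ ε > 0, ∀ᶠ b in l, ‖y b‖ ≤ a + ε)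
    (hy : ∀ v, Tendsto (fun b => y b v) l (𝓝 ((a • x) v))) (Θ : Dual ℝ (Dual ℝ E)) :
    Tendsto (fun b => Θ (y b)) l (𝓝 (Θ (a • x))) := by
  -- Rescale `y b` into the unit ball by `c b ≥ ‖y b‖`, with `c b → a`.
  set c : β → ℝ := fun b => max a ‖y b‖
  have hc_pos : ∀ b, 0 < c b := fun b => ha.trans_le (le_max_left _ _)
  have hc : Tendsto c l (𝓝 a) := by
    refine tendsto_order.2 ⟨fun r hr => .of_forall fun b => hr.trans_le (le_max_left _ _),
      fun r hr => ?_⟩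
    filter_upwards [hnorm ((r - a) / 2) (by linarith)] with b hb
    exact max_lt hr (by linarith)
  set z : β → Dual ℝ E := fun b => (c b)⁻¹ • y b
  have hz_norm : ∀ b, ‖z b‖ ≤ 1 := fun b => by
    rw [norm_smul, norm_inv, Real.norm_of_nonneg (hc_pos b).le]
    exact inv_mul_le_one_of_le₀ (le_max_right _ _) (hc_pos b).le
  have hz : ∀ v, Tendsto (fun b => z b v) l (𝓝 (x v)) := fun v => by
    have := (hc.inv₀ ha.ne').mul (hy v)
    rwa [smul_apply, smul_eq_mul, inv_mul_cancel_left₀ ha.ne'] at this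
  have := hc.mul (tendsto_map'_iff.1 <| hx (l.map z) inferInstance
    (eventually_map.2 (.of_forall hz_norm)) (fun v => tendsto_map'_iff.2 (hz v)) Θ)
  rw [map_smul, smul_eq_mul]
  refine this.congr fun b => ?_
  simp only [Function.comp_apply, z, map_smul, smul_eq_mul, ← mul_assoc,
    mul_inv_cancel₀ (hc_pos b).ne', one_mul]

theorem goldstine_finite (z : Dual ℝ (Dual ℝ E)) (hz : ‖z‖ ≤ 1) (I : Set (Dual ℝ E))
    [Finite I] :
    (fun ψ : I => z ψ) ∈ closure ((fun (y : E) (ψ : I) => ψ.1 y) '' closedBall 0 1) := by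
  classical
  cases nonempty_fintype I
  set T : E →L[ℝ] (I → ℝ) := ContinuousLinearMap.pi fun ψ => ψ.1
  by_contra hzK
  obtain ⟨f, u, hfK, hfz⟩ := geometric_hahn_banach_closed_point
    ((convex_closedBall (0 : E) 1).linear_image T.toLinearMap).closure isClosed_closure hzK
  set a : I → ℝ := fun ψ => f fun j => if ψ = j then 1 else 0
  have hf : ∀ w, f w = ∑ ψ, w ψ * a ψ := fun w => by
    simpa using f.toLinearMap.pi_apply_eq_sum_univ w
  have hfT : f ∘L T = ∑ ψ, a ψ • ψ.1 := by
    ext y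
    simp [hf, T, mul_comm]
  have hfT_norm : ‖f ∘L T‖ ≤ u := (f ∘L T).opNorm_le_of_apply_le fun y hy =>
    (hfK _ (subset_closure ⟨y, mem_closedBall_zero_iff.2 hy, rfl⟩)).le
  have hfz' : f (fun ψ : I => z ψ) = z (f ∘L T) := by
    rw [hfT, map_sum]
    simp [hf, mul_comm]
  have : z (f ∘L T) ≤ u := calc
    z (f ∘L T) ≤ ‖z‖ * ‖f ∘L T‖ := (Real.le_norm_self _).trans (z.le_opNorm _)
    _ ≤ 1 * ‖f ∘L T‖ := by gcongr
    _ ≤ u := by rwa [one_mul]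
  linarith

theorem goldstine (z : Dual ℝ (Dual ℝ E)) (hz : ‖z‖ ≤ 1) :
    (⇑z : Dual ℝ E → ℝ) ∈ closure ((fun (y : E) (ψ : Dual ℝ E) => ψ y) '' closedBall 0 1) := by
  have hbasis := hasBasis_pi fun ψ : Dual ℝ E => nhds_basis_ball (x := z ψ)
  rw [← nhds_pi] at hbasis
  rw [mem_closure_iff_nhds_basis hbasis]
  rintro ⟨I, ε⟩ ⟨hI, hε⟩
  have := hI.to_subtype
  obtain ⟨w, hw, y, hy, rfl⟩ := mem_closure_iff_nhds.1 (goldstine_finite z hz I) _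
    (set_pi_mem_nhds Set.finite_univ fun ψ _ => ball_mem_nhds _ (hε ψ ψ.2))
  exact ⟨_, ⟨y, hy, rfl⟩, fun ψ hψ => hw ⟨ψ, hψ⟩ trivial⟩

theorem IsWStarWPC.eq_inclusionInDoubleDual {Λ : Dual ℝ E} (hΛ : IsWStarWPC Λ)
    {μ : Dual ℝ (Dual ℝ (Dual ℝ E))} (hμ : ‖μ‖ ≤ 1)
    (hext : ∀ f : E, μ (inclusionInDoubleDual ℝ E f) = Λ f) :
    μ = inclusionInDoubleDual ℝ (Dual ℝ E) Λ := by
  set j : Dual ℝ E → Dual ℝ (Dual ℝ E) → ℝ := fun φ Ψ => Ψ φ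
  set B := closedBall (0 : Dual ℝ E) 1
  -- By Goldstine, the unit ball of `E*` contains a net converging weak* to `μ` in `E***`.
  set l := comap j (𝓝[j '' B] ⇑μ) ⊓ 𝓟 B
  have hl : l.NeBot := comap_inf_principal_neBot_of_image_mem
    (mem_closure_iff_nhdsWithin_neBot.1 (goldstine μ hμ)) self_mem_nhdsWithin
  have hlim : ∀ Ψ, Tendsto (fun φ => Ψ φ) l (𝓝 (μ Ψ)) := fun Ψ =>
    ((continuous_apply Ψ).tendsto ⇑μ).comp (f := j)
      ((tendsto_comap.mono_left inf_le_left).mono_right nhdsWithin_le_nhds)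
  have hB : ∀ᶠ φ in l, ‖φ‖ ≤ 1 :=
    mem_of_superset (mem_inf_of_right (mem_principal_self B)) fun φ => mem_closedBall_zero_iff.1
  ext Ψ
  exact tendsto_nhds_unique (hlim Ψ) (hΛ l hl hB (fun f => hext f ▸ hlim _) Ψ)

end Dual

namespace ZeroAtInftyContinuousMap

variable {S X : Type*} [TopologicalSpace S] [NormedAddCommGroup X]

theorem norm_coe_le_norm (f : C₀(S, X)) (t : S) : ‖f t‖ ≤ ‖f‖ :=
  norm_toBCF_eq_norm (f := f) ▸ f.toBCF.norm_coe_le_norm t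

theorem norm_le {f : C₀(S, X)} {C : ℝ} (hC : 0 ≤ C) : ‖f‖ ≤ C ↔ ∀ t, ‖f t‖ ≤ C :=
  norm_toBCF_eq_norm (f := f) ▸ BoundedContinuousFunction.norm_le hC

variable [NormedSpace ℝ X]

noncomputable def evalCLM (t : S) : C₀(S, X) →L[ℝ] X :=
  LinearMap.mkContinuous
    { toFun f := f t
      map_add' _ _ := rfl
      map_smul' _ _ := rfl }
    1 fun f => by simpa using f.norm_coe_le_norm t

@[simp]
theorem evalCLM_apply (t : S) (f : C₀(S, X)) : evalCLM t f = f t := rfl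

@[simp]
theorem sum_apply {ι : Type*} (T : Finset ι) (f : ι → C₀(S, X)) (t : S) :
    (∑ i ∈ T, f i) t = ∑ i ∈ T, f i t :=
  map_sum (evalCLM t) f T

variable [DiscreteTopology S] [DecidableEq S]

noncomputable def single (t : S) : X →L[ℝ] C₀(S, X) :=
  LinearMap.mkContinuous
    { toFun v :=
        { toFun := (Pi.single t v : S → X)
          continuous_toFun := continuous_of_discreteTopology
          zero_at_infty' := tendsto_const_nhds.congr' <| mem_of_superset
            (isCompact_singleton (x := t)).compl_mem_cocompact fun t' ht' => by
              simp_all [Pi.single_apply] }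
      map_add' v w := by ext; simp [Pi.single_add]
      map_smul' c v := by ext; simp [Pi.single_smul'] }
    1 fun v => by
      rw [one_mul, norm_le (norm_nonneg v)]
      intro t'
      rcases eq_or_ne t' t with rfl | h <;> simp [*]

@[simp]
theorem single_apply (t : S) (v : X) (t' : S) : single t v t' = (Pi.single t v : S → X) t' := rfl

noncomputable def eraseCLM (T : Finset S) : C₀(S, X) →L[ℝ] C₀(S, X) :=
  ContinuousLinearMap.id ℝ _ - ∑ t ∈ T, single t ∘L evalCLM t

theorem eraseCLM_apply (T : Finset S) (g : C₀(S, X)) (t : S) :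
    eraseCLM T g t = if t ∈ T then 0 else g t := by
  by_cases ht : t ∈ T <;> simp [eraseCLM, ht]

theorem norm_eraseCLM_add_sum_single_le {T : Finset S} {g : C₀(S, X)} {u : S → X} {C : ℝ}
    (hg : ‖g‖ ≤ C) (hu : ∀ t ∈ T, ‖u t‖ ≤ C) :
    ‖eraseCLM T g + ∑ t ∈ T, single t (u t)‖ ≤ C := by
  refine (norm_le ((norm_nonneg g).trans hg)).2 fun t => ?_
  simp only [coe_add, Pi.add_apply, eraseCLM_apply, sum_apply, single_apply, Finset.sum_pi_single]
  split_ifs with ht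
  · simpa using hu t ht
  · simpa using (g.norm_coe_le_norm t).trans hg

theorem comp_eraseCLM_add_sum (φ : Dual ℝ C₀(S, X)) (T : Finset S) :
    φ ∘L eraseCLM T + ∑ t ∈ T, (φ ∘L single t) ∘L evalCLM t = φ := by
  ext g
  simp [eraseCLM, map_sum]

theorem sum_norm_comp_single_add_norm_comp_eraseCLM_le (φ : Dual ℝ C₀(S, X)) (T : Finset S) :
    ∑ t ∈ T, ‖φ ∘L single t‖ + ‖φ ∘L eraseCLM T‖ ≤ ‖φ‖ := by
  refine le_of_forall_lt fun r hr => ?_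
  obtain ⟨r₁, hr₁, hr₁'⟩ := exists_between (sub_lt_iff_lt_add.2 hr)
  obtain ⟨u, hu, hru⟩ := exists_norm_le_one_lt_sum_apply T (fun t => φ ∘L single t) hr₁'
  obtain ⟨g, hg, hrg⟩ := (φ ∘L eraseCLM T).exists_norm_le_one_lt_apply (r := r - r₁) (by linarith)
  simp only [ContinuousLinearMap.comp_apply] at hru hrg
  calc r < φ (eraseCLM T g) + ∑ t ∈ T, φ (single t (u t)) := by linarith
    _ = φ (eraseCLM T g + ∑ t ∈ T, single t (u t)) := by rw [map_add, map_sum]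
    _ ≤ ‖φ‖ := φ.apply_le_opNorm_of_norm_le_one
        (norm_eraseCLM_add_sum_single_le hg fun t _ => hu t)

theorem tendsto_apply_of_tendsto_comp_single {β : Type*} {l : Filter β}
    {φ : β → Dual ℝ C₀(S, X)} {Λ : Dual ℝ C₀(S, X)} {A : Set S}
    (hcoord : ∀ t ∈ A, ∀ Θ : Dual ℝ (Dual ℝ X),
      Tendsto (fun b => Θ (φ b ∘L single t)) l (𝓝 (Θ (Λ ∘L single t))))
    (htail : ∀ ε > 0, ∃ T : Finset S, ↑T ⊆ A ∧ ‖Λ ∘L eraseCLM T‖ ≤ ε ∧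
      ∀ᶠ b in l, ‖φ b ∘L eraseCLM T‖ ≤ ε)
    (Ψ : Dual ℝ (Dual ℝ C₀(S, X))) : Tendsto (fun b => Ψ (φ b)) l (𝓝 (Ψ Λ)) := by
  rw [Metric.tendsto_nhds]
  intro ε hε
  set δ := ε / (3 * (‖Ψ‖ + 1))
  have hΨδ : ∀ ψ : Dual ℝ C₀(S, X), ‖ψ‖ ≤ δ → |Ψ ψ| ≤ ε / 3 := fun ψ hψ => calc
    |Ψ ψ| ≤ ‖Ψ‖ * δ := Ψ.le_opNorm_of_le hψ
    _ ≤ (‖Ψ‖ + 1) * δ := by gcongr; linarith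
    _ = ε / 3 := by simp only [δ]; field_simp
  obtain ⟨T, hTA, hΛT, hφT⟩ := htail δ (by positivity)
  set Θ : S → Dual ℝ (Dual ℝ X) := fun t => Ψ ∘L ContinuousLinearMap.precomp ℝ (evalCLM t)
  have hdecomp : ∀ ψ : Dual ℝ C₀(S, X),
      Ψ ψ = Ψ (ψ ∘L eraseCLM T) + ∑ t ∈ T, Θ t (ψ ∘L single t) := fun ψ => by
    conv_lhs => rw [← comp_eraseCLM_add_sum ψ T]
    simp [Θ, map_sum]
  have hsum := tendsto_finsetSum T fun t ht => hcoord t (hTA ht) (Θ t)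
  filter_upwards [hφT, Metric.tendsto_nhds.1 hsum (ε / 3) (by positivity)] with b hb hb'
  have h₁ := abs_le.1 (hΨδ _ hb)
  have h₂ := abs_le.1 (hΨδ _ hΛT)
  rw [Real.dist_eq, abs_sub_lt_iff] at hb' ⊢
  rw [hdecomp (φ b), hdecomp Λ]
  constructor <;> linarith

end ZeroAtInftyContinuousMap

open ZeroAtInftyContinuousMap

theorem isWStarWPC_of_comp_single_eq_smul {S X : Type*} [TopologicalSpace S]
    [DiscreteTopology S] [DecidableEq S] [NormedAddCommGroup X] [NormedSpace ℝ X]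
    {Λ : Dual ℝ C₀(S, X)} (hΛ : ‖Λ‖ ≤ 1) {α : ℕ → ℝ} (hα : ∀ i, 0 < α i)
    (hαsum : HasSum α 1) {s : ℕ → S} (hs : Function.Injective s) {x : ℕ → Dual ℝ X}
    (hx : ∀ i, ‖x i‖ = 1) (hxpc : ∀ i, IsWStarWPC (x i))
    (hcoord : ∀ i, Λ ∘L single (s i) = α i • x i) : IsWStarWPC Λ := by
  intro l hl hball hconv Ψ
  set y : Dual ℝ C₀(S, X) → ℕ → Dual ℝ X := fun φ i => φ ∘L single (s i)
  have hy : ∀ i v, Tendsto (fun φ => y φ i v) l (𝓝 ((α i • x i) v)) := fun i v => by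
    simpa [y, ← hcoord] using hconv (single (s i) v)
  have hΛi : ∀ i, ‖α i • x i‖ = α i := fun i => by
    rw [norm_smul, hx, mul_one, Real.norm_of_nonneg (hα i).le]
  have hlower : ∀ (F : Finset ℕ), ∀ r < ∑ i ∈ F, α i, ∀ᶠ φ in l, r < ∑ i ∈ F, ‖y φ i‖ :=
    fun F r hr => eventually_lt_sum_norm_of_tendsto_apply hy F (by simpa [hΛi] using hr)
  have hsum_le : ∀ φ (F : Finset ℕ),
      ∑ i ∈ F, ‖y φ i‖ + ‖φ ∘L eraseCLM (F.map ⟨s, hs⟩)‖ ≤ ‖φ‖ := fun φ F => by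
    simpa using sum_norm_comp_single_add_norm_comp_eraseCLM_le φ (F.map ⟨s, hs⟩)
  have hpartial : ∀ ε > 0, ∀ n, ∃ N, n < N ∧ 1 - ε < ∑ i ∈ Finset.range N, α i :=
    fun ε hε n => ((hαsum.tendsto_sum_nat.eventually (lt_mem_nhds (by linarith))).and
      (eventually_gt_atTop n)).exists.imp fun N hN => ⟨hN.2, hN.1⟩
  -- Eventually the coordinates other than `i` carry almost all of the mass `1`.
  have hupper : ∀ i, ∀ ε > 0, ∀ᶠ φ in l, ‖y φ i‖ ≤ α i + ε := fun i ε hε => by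
    obtain ⟨N, hiN, hN⟩ := hpartial ε hε i
    have hiN' : i ∈ Finset.range N := Finset.mem_range.2 hiN
    have hαsplit := Finset.add_sum_erase _ α hiN'
    filter_upwards [hball, hlower ((Finset.range N).erase i) (1 - ε - α i) (by linarith)]
      with φ h₁ h₂
    have hφsplit := hsum_le φ (Finset.range N)
    rw [← Finset.add_sum_erase _ _ hiN'] at hφsplit
    linarith [norm_nonneg (φ ∘L eraseCLM ((Finset.range N).map ⟨s, hs⟩))]
  refine tendsto_apply_of_tendsto_comp_single (A := Set.range s) ?_ (fun ε hε => ?_) Ψ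
  · rintro _ ⟨i, rfl⟩ Θ
    rw [hcoord]
    exact (hxpc i).tendsto_apply_smul (hα i) (hupper i) (hy i) Θ
  obtain ⟨N, -, hN⟩ := hpartial ε hε 0
  refine ⟨(Finset.range N).map ⟨s, hs⟩, by simp, ?_, ?_⟩
  · have := hsum_le Λ (Finset.range N)
    simp only [y, hcoord, hΛi] at this
    linarith
  · filter_upwards [hball, hlower (Finset.range N) (1 - ε) hN] with φ h₁ h₂
    linarith [hsum_le φ (Finset.range N)]

theorem unique_extension_of_l1_sum_of_wStarWPC_general
    {S : Type*} [TopologicalSpace S] [DiscreteTopology S]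
    {X : Type*} [NormedAddCommGroup X] [NormedSpace ℝ X]
    (Λ : Dual ℝ (ZeroAtInftyContinuousMap S X)) (hΛ : ‖Λ‖ = 1)
    (α : ℕ → ℝ) (hα : ∀ i, α i ∈ Set.Ioc (0 : ℝ) 1) (hαsum : HasSum α 1)
    (s : ℕ → S) (hs : Function.Injective s)
    (x : ℕ → Dual ℝ X) (hx : ∀ i, ‖x i‖ = 1) (hxpc : ∀ i, IsWStarWPC (x i))
    (hrep : ∀ f : ZeroAtInftyContinuousMap S X,
      Λ f = ∑' i, α i * (x i) (f (s i))) :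
    (∃! Λ' : Dual ℝ (Dual ℝ (Dual ℝ (ZeroAtInftyContinuousMap S X))),
        (∀ f : ZeroAtInftyContinuousMap S X,
          Λ' (inclusionInDoubleDual ℝ (ZeroAtInftyContinuousMap S X) f) = Λ f) ∧
        ‖Λ'‖ = ‖Λ‖) ∧
      IsWStarWPC Λ := by
  classical
  have hcoord : ∀ i, Λ ∘L single (s i) = α i • x i := fun i => by
    ext v
    rw [ContinuousLinearMap.comp_apply, hrep, tsum_eq_single i fun j hj => by
      simp [hs.ne hj]]
    simp
  have hpc : IsWStarWPC Λ :=
    isWStarWPC_of_comp_single_eq_smul hΛ.le (fun i => (hα i).1) hαsum hs hx hxpc hcoord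
  refine ⟨⟨inclusionInDoubleDual ℝ _ Λ, ⟨fun f => rfl, (inclusionInDoubleDualLi ℝ).norm_map Λ⟩,
    fun μ hμ => hpc.eq_inclusionInDoubleDual (hμ.2.trans hΛ).le hμ.1⟩, hpc⟩

/-- **Unique norm-preserving extensions of ℓ¹-sums of w\*-w PCs on `c₀(S, X)`.**  Let `S`
be a discrete set and `Λ = ∑ α_i (e_{s_i} ⊗ x_i*) ∈ S(c₀(S, X)*) = S(ℓ¹(S, X*))` with
`α_i ∈ (0, 1]`, `∑ α_i = 1`, `s_i ∈ S` distinct, and each `x_i* ∈ S(X*)` a w\*-w point of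
continuity of `X*₁`.  Then `Λ` has a unique norm-preserving extension from `c₀(S, X)` to
its bidual `c₀(S, X)** = ℓ^∞(S, X**)`; consequently `Λ` is a w\*-w point of continuity of
the dual unit ball of `c₀(S, X)`. -/
theorem unique_extension_of_l1_sum_of_wStarWPC
    {S : Type*} [TopologicalSpace S] [DiscreteTopology S]
    {X : Type*} [NormedAddCommGroup X] [NormedSpace ℝ X] [CompleteSpace X]
    (Λ : Dual ℝ (ZeroAtInftyContinuousMap S X)) (hΛ : ‖Λ‖ = 1)
    (α : ℕ → ℝ) (hα : ∀ i, α i ∈ Set.Ioc (0 : ℝ) 1) (hαsum : HasSum α 1)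
    (s : ℕ → S) (hs : Function.Injective s)
    (x : ℕ → Dual ℝ X) (hx : ∀ i, ‖x i‖ = 1) (hxpc : ∀ i, IsWStarWPC (x i))
    (hrep : ∀ f : ZeroAtInftyContinuousMap S X,
      Λ f = ∑' i, α i * (x i) (f (s i))) :
    (∃! Λ' : Dual ℝ (Dual ℝ (Dual ℝ (ZeroAtInftyContinuousMap S X))),
        (∀ f : ZeroAtInftyContinuousMap S X,
          Λ' (inclusionInDoubleDual ℝ (ZeroAtInftyContinuousMap S X) f) = Λ f) ∧
        ‖Λ'‖ = ‖Λ‖) ∧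
      IsWStarWPC Λ :=
  unique_extension_of_l1_sum_of_wStarWPC_general Λ hΛ α hα hαsum s hs x hx hxpc hrep
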